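/- Let (a,b) be a negaperiodic Golay pair of length v with a quasi-symmetric (a_k = a_{v-k} for 0 < k < v) and a_0 = 1, and let A, B be the negacyclic matrices with first rows a, b. Then the matrix H = [[A, B], [-B^T, A^T]] is a skew-Hadamard matrix, and replacing its diagonal entries by 0 yields a weighing matrix W(2v, 2v-1), i.e., a {0,±1}-matrix W of order 2v with W W^T = (2v-1) I. -/
import Mathlib


/-- Ordinary autocorrelation. -/
def AF (v : ℕ) (a : ℕ → ℤ) (k : ℕ) : ℤ :=
  ∑ i ∈ Finset.range (v - k), a i * a (i + k)

/-- Negaperiodic autocorrelation `NAF_a(k) = AF_a(k) - AF_a(v-k)`. -/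
def NAF (v : ℕ) (a : ℕ → ℤ) (k : ℕ) : ℤ :=
  AF v a k - AF v a (v - k)

/-- The negacyclic shift matrix `N` of order `v`. -/
def negaShift (v : ℕ) : Matrix (Fin v) (Fin v) ℤ :=
  Matrix.of fun i j => if (i : ℕ) + 1 = (j : ℕ) then 1
    else if (i : ℕ) = v - 1 ∧ (j : ℕ) = 0 then -1 else 0

/-- The negacyclic matrix of order `v` with first row `a`. -/
def negacyclic (v : ℕ) (a : ℕ → ℤ) : Matrix (Fin v) (Fin v) ℤ :=
  ∑ i ∈ Finset.range v, a i • (negaShift v) ^ i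

/-- The 2N-type block matrix `[[A, B], [-Bᵀ, Aᵀ]]`. -/
def twoNBlock (v : ℕ) (a b : ℕ → ℤ) : Matrix (Fin v ⊕ Fin v) (Fin v ⊕ Fin v) ℤ :=
  Matrix.fromBlocks (negacyclic v a) (negacyclic v b)
    (-(negacyclic v b).transpose) (negacyclic v a).transpose

/-- The matrix obtained from `M` by replacing its diagonal entries with `0`. -/
def zeroDiag {n : Type*} [DecidableEq n] (M : Matrix n n ℤ) : Matrix n n ℤ :=
  Matrix.of fun i j => if i = j then 0 else M i j

open Matrix in
/-- Auxiliary: the explicit entry function of a negacyclic matrix. -/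
def Ent (v : ℕ) (a : ℕ → ℤ) (i j : ℕ) : ℤ :=
  if i ≤ j then a (j - i) else -(a (v + j - i))

open Matrix

lemma negaShift_pow_apply (v k : ℕ) (hk : k < v) (i j : Fin v) :
    ((negaShift v) ^ k) i j =
      if (j : ℕ) = (i : ℕ) + k then 1
      else if (j : ℕ) + v = (i : ℕ) + k then -1 else 0 := by
  induction k generalizing j with
  | zero =>
    have hi := i.isLt
    have hj := j.isLt
    simp only [pow_zero, Matrix.one_apply, Nat.add_zero]
    have : (i = j) ↔ ((j:ℕ) = (i:ℕ)) := by
      constructor <;> intro h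
      · rw [h]
      · exact (Fin.ext h.symm)
    split_ifs <;> simp_all <;> omega
  | succ k ih =>
    have hkv : k < v := Nat.lt_of_succ_lt hk
    have hv : 0 < v := by omega
    rw [pow_succ, Matrix.mul_apply]
    have hi := i.isLt
    have hj := j.isLt
    set l0 : Fin v := ⟨((i:ℕ) + k) % v, Nat.mod_lt _ hv⟩ with hl0def
    have hl0 : (l0 : ℕ) = ((i:ℕ) + k) % v := rfl
    have hmm : ((i:ℕ) + k) % v = (i:ℕ) + k ∨ ((i:ℕ) + k) % v + v = (i:ℕ) + k := by
      rcases Nat.lt_or_ge ((i:ℕ) + k) v with h | h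
      · exact Or.inl (Nat.mod_eq_of_lt h)
      · right
        rw [Nat.mod_eq_sub_mod h, Nat.mod_eq_of_lt (by omega)]
        omega
    rcases hmm with hm | hm
    all_goals
      rw [Finset.sum_eq_single l0]
      · rw [ih hkv l0]
        simp only [negaShift, Matrix.of_apply]
        split_ifs <;> (try rfl) <;> omega
      · intro l _ hl
        have hlv := l.isLt
        have hlne : (l : ℕ) ≠ (l0 : ℕ) := fun h => hl (Fin.ext h)
        rw [ih hkv l]
        rw [if_neg (by omega), if_neg (by omega), zero_mul]
      · intro h
        exact absurd (Finset.mem_univ l0) h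

lemma negacyclic_apply (v : ℕ) (a : ℕ → ℤ) (i j : Fin v) :
    negacyclic v a i j = Ent v a (i : ℕ) (j : ℕ) := by
  have hi := i.isLt
  have hj := j.isLt
  rw [negacyclic, Matrix.sum_apply, Ent]
  simp only [Matrix.smul_apply, smul_eq_mul]
  by_cases hij : (i : ℕ) ≤ (j : ℕ)
  · rw [if_pos hij]
    rw [Finset.sum_eq_single ((j:ℕ) - (i:ℕ))]
    · rw [negaShift_pow_apply v _ (by omega), if_pos (by omega), mul_one]
    · intro k hkmem hk
      have hkv := Finset.mem_range.mp hkmem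
      rw [negaShift_pow_apply v _ hkv, if_neg (by omega), if_neg (by omega), mul_zero]
    · intro h
      exact absurd (Finset.mem_range.mpr (by omega)) h
  · rw [if_neg hij]
    rw [Finset.sum_eq_single (v + (j:ℕ) - (i:ℕ))]
    · rw [negaShift_pow_apply v _ (by omega), if_neg (by omega), if_pos (by omega)]
      ring
    · intro k hkmem hk
      have hkv := Finset.mem_range.mp hkmem
      rw [negaShift_pow_apply v _ hkv, if_neg (by omega), if_neg (by omega), mul_zero]
    · intro h
      exact absurd (Finset.mem_range.mpr (by omega)) h

lemma core1 (v : ℕ) (a : ℕ → ℤ) (i j : ℕ) (hij : i < j) (hj : j < v) :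
    ∑ l ∈ Finset.range v, Ent v a i l * Ent v a j l = NAF v a (j - i) := by
  have e1 : Finset.range v = Finset.Ico 0 v := by rw [Finset.range_eq_Ico]
  rw [e1, ← Finset.sum_Ico_consecutive _ (show 0 ≤ j by omega) (show j ≤ v by omega),
    ← Finset.sum_Ico_consecutive _ (show 0 ≤ i by omega) (show i ≤ j by omega)]
  rw [NAF, AF, AF]
  have hsplit : Finset.range (v - (j - i)) = Finset.Ico 0 (v - (j-i)) := by
    rw [Finset.range_eq_Ico]
  rw [hsplit, ← Finset.sum_Ico_consecutive _ (show 0 ≤ v - j by omega)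
    (show v - j ≤ v - (j-i) by omega)]
  have p3 : ∑ l ∈ Finset.Ico j v, Ent v a i l * Ent v a j l
      = ∑ m ∈ Finset.Ico 0 (v - j), a m * a (m + (j - i)) := by
    rw [Finset.sum_Ico_eq_sum_range, Finset.sum_Ico_eq_sum_range]
    apply Finset.sum_congr (by congr 1 <;> omega) fun t ht => ?_
    have htv := Finset.mem_range.mp ht
    rw [Ent, Ent, if_pos (by omega), if_pos (by omega)]
    have g1 : j + t - i = 0 + t + (j - i) := by omega
    have g2 : j + t - j = 0 + t := by omega
    rw [g1, g2, mul_comm]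
  have p1 : ∑ l ∈ Finset.Ico 0 i, Ent v a i l * Ent v a j l
      = ∑ m ∈ Finset.Ico (v - j) (v - (j - i)), a m * a (m + (j - i)) := by
    rw [Finset.sum_Ico_eq_sum_range, Finset.sum_Ico_eq_sum_range]
    apply Finset.sum_congr (by congr 1 <;> omega) fun t ht => ?_
    have htv := Finset.mem_range.mp ht
    rw [Ent, Ent, if_neg (by omega), if_neg (by omega), neg_mul_neg]
    have g1 : v + (0 + t) - i = v - j + t + (j - i) := by omega
    have g2 : v + (0 + t) - j = v - j + t := by omega
    rw [g1, g2, mul_comm]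
  have p2 : ∑ l ∈ Finset.Ico i j, Ent v a i l * Ent v a j l
      = -∑ m ∈ Finset.range (v - (v - (j - i))), a m * a (m + (v - (j - i))) := by
    rw [Finset.sum_Ico_eq_sum_range, ← Finset.sum_neg_distrib]
    apply Finset.sum_congr (by congr 1 <;> omega) fun t ht => ?_
    have htv := Finset.mem_range.mp ht
    rw [Ent, Ent, if_pos (by omega), if_neg (by omega)]
    have g1 : i + t - i = t := by omega
    have g2 : v + (i + t) - j = t + (v - (j - i)) := by omega
    rw [g1, g2]
    ring
  rw [p1, p2, p3]
  ring

lemma core2 (v : ℕ) (a : ℕ → ℤ) (i j : ℕ) (hij : i < j) (hj : j < v) :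
    ∑ l ∈ Finset.range v, Ent v a l i * Ent v a l j = NAF v a (j - i) := by
  have e1 : Finset.range v = Finset.Ico 0 v := by rw [Finset.range_eq_Ico]
  rw [e1, ← Finset.sum_Ico_consecutive _ (show 0 ≤ j + 1 by omega) (show j + 1 ≤ v by omega),
    ← Finset.sum_Ico_consecutive _ (show 0 ≤ i + 1 by omega) (show i + 1 ≤ j + 1 by omega)]
  rw [NAF, AF, AF]
  have hsplit : Finset.range (v - (j - i)) = Finset.Ico 0 (v - (j-i)) := by
    rw [Finset.range_eq_Ico]
  rw [hsplit, ← Finset.sum_Ico_consecutive _ (show 0 ≤ i + 1 by omega)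
    (show i + 1 ≤ v - (j-i) by omega)]
  have r1 : ∑ l ∈ Finset.Ico 0 (i+1), Ent v a l i * Ent v a l j
      = ∑ m ∈ Finset.Ico 0 (i+1), a m * a (m + (j - i)) := by
    rw [Finset.sum_Ico_eq_sum_range, Finset.sum_Ico_eq_sum_range,
      ← Finset.sum_range_reflect (fun m => a (0 + m) * a (0 + m + (j - i))) (i+1-0)]
    apply Finset.sum_congr rfl fun t ht => ?_
    have htv := Finset.mem_range.mp ht
    rw [Ent, Ent, if_pos (by omega), if_pos (by omega)]
    have g1 : i - (0 + t) = 0 + (i + 1 - 0 - 1 - t) := by omega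
    have g2 : j - (0 + t) = 0 + (i + 1 - 0 - 1 - t) + (j - i) := by omega
    rw [g1, g2]
  have r3 : ∑ l ∈ Finset.Ico (j+1) v, Ent v a l i * Ent v a l j
      = ∑ m ∈ Finset.Ico (i+1) (v - (j - i)), a m * a (m + (j - i)) := by
    rw [Finset.sum_Ico_eq_sum_range, Finset.sum_Ico_eq_sum_range,
      ← Finset.sum_range_reflect (fun m => a (i + 1 + m) * a (i + 1 + m + (j - i)))
        (v - (j - i) - (i + 1))]
    apply Finset.sum_congr (by congr 1 <;> omega) fun t ht => ?_
    have htv := Finset.mem_range.mp ht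
    rw [Ent, Ent, if_neg (by omega), if_neg (by omega), neg_mul_neg]
    have g1 : v + i - (j + 1 + t) = i + 1 + (v - (j - i) - (i + 1) - 1 - t) := by omega
    have g2 : v + j - (j + 1 + t) = i + 1 + (v - (j - i) - (i + 1) - 1 - t) + (j - i) := by
      omega
    rw [g1, g2]
  have r2 : ∑ l ∈ Finset.Ico (i+1) (j+1), Ent v a l i * Ent v a l j
      = -∑ m ∈ Finset.range (v - (v - (j - i))), a m * a (m + (v - (j - i))) := by
    rw [Finset.sum_Ico_eq_sum_range, ← Finset.sum_neg_distrib,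
      ← Finset.sum_range_reflect (fun m => -(a m * a (m + (v - (j - i))))) (v - (v - (j-i)))]
    apply Finset.sum_congr (by congr 1 <;> omega) fun t ht => ?_
    have htv := Finset.mem_range.mp ht
    rw [Ent, Ent, if_neg (by omega), if_pos (by omega)]
    have g1 : v + i - (i + 1 + t) = v - (v - (j - i)) - 1 - t + (v - (j - i)) := by omega
    have g2 : j - (i + 1 + t) = v - (v - (j - i)) - 1 - t := by omega
    rw [g1, g2]
    ring
  rw [r1, r2, r3]
  ring

lemma ent_sq (v : ℕ) (a : ℕ → ℤ) (ha : ∀ i, i < v → a i = 1 ∨ a i = -1)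
    (i l : ℕ) (hi : i < v) (hl : l < v) : Ent v a i l * Ent v a i l = 1 := by
  rw [Ent]
  split_ifs with h
  · rcases ha (l - i) (by omega) with h1 | h1 <;> rw [h1] <;> norm_num
  · rcases ha (v + l - i) (by omega) with h1 | h1 <;> rw [h1] <;> norm_num

lemma diag_sum (v : ℕ) (a : ℕ → ℤ) (ha : ∀ i, i < v → a i = 1 ∨ a i = -1)
    (i : ℕ) (hi : i < v) :
    ∑ l ∈ Finset.range v, Ent v a i l * Ent v a i l = (v : ℤ) := by
  rw [Finset.sum_congr rfl (fun l hl => ent_sq v a ha i l hi (Finset.mem_range.mp hl))]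
  simp

lemma diag_sum' (v : ℕ) (a : ℕ → ℤ) (ha : ∀ i, i < v → a i = 1 ∨ a i = -1)
    (i : ℕ) (hi : i < v) :
    ∑ l ∈ Finset.range v, Ent v a l i * Ent v a l i = (v : ℤ) := by
  rw [Finset.sum_congr rfl
    (fun l hl => ent_sq v a ha l i (Finset.mem_range.mp hl) hi)]
  simp

lemma pair1 (v : ℕ) (a b : ℕ → ℤ)
    (hng : ∀ k, 0 < k → k < v → NAF v a k + NAF v b k = 0)
    (i j : ℕ) (hi : i < v) (hj : j < v) (hne : i ≠ j) :
    (∑ l ∈ Finset.range v, Ent v a i l * Ent v a j l) +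
      (∑ l ∈ Finset.range v, Ent v b i l * Ent v b j l) = 0 := by
  rcases Nat.lt_or_ge i j with h | h
  · rw [core1 v a i j h hj, core1 v b i j h hj]
    exact hng (j - i) (by omega) (by omega)
  · have h' : j < i := by omega
    rw [Finset.sum_congr rfl (fun l _ => mul_comm (Ent v a i l) (Ent v a j l)),
      Finset.sum_congr rfl (fun l _ => mul_comm (Ent v b i l) (Ent v b j l)),
      core1 v a j i h' hi, core1 v b j i h' hi]
    exact hng (i - j) (by omega) (by omega)

lemma pair2 (v : ℕ) (a b : ℕ → ℤ)
    (hng : ∀ k, 0 < k → k < v → NAF v a k + NAF v b k = 0)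
    (i j : ℕ) (hi : i < v) (hj : j < v) (hne : i ≠ j) :
    (∑ l ∈ Finset.range v, Ent v a l i * Ent v a l j) +
      (∑ l ∈ Finset.range v, Ent v b l i * Ent v b l j) = 0 := by
  rcases Nat.lt_or_ge i j with h | h
  · rw [core2 v a i j h hj, core2 v b i j h hj]
    exact hng (j - i) (by omega) (by omega)
  · have h' : j < i := by omega
    rw [Finset.sum_congr rfl (fun l _ => mul_comm (Ent v a l i) (Ent v a l j)),
      Finset.sum_congr rfl (fun l _ => mul_comm (Ent v b l i) (Ent v b l j)),
      core2 v a j i h' hi, core2 v b j i h' hi]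
    exact hng (i - j) (by omega) (by omega)

lemma M1 (v : ℕ) (a b : ℕ → ℤ)
    (ha : ∀ i, i < v → a i = 1 ∨ a i = -1) (hb : ∀ i, i < v → b i = 1 ∨ b i = -1)
    (hng : ∀ k, 0 < k → k < v → NAF v a k + NAF v b k = 0) :
    negacyclic v a * (negacyclic v a)ᵀ + negacyclic v b * (negacyclic v b)ᵀ =
      ((2 * v : ℕ) : ℤ) • (1 : Matrix (Fin v) (Fin v) ℤ) := by
  ext i j
  have hi := i.isLt
  have hj := j.isLt
  simp only [Matrix.add_apply, Matrix.mul_apply, Matrix.transpose_apply,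
    Matrix.smul_apply, Matrix.one_apply, smul_eq_mul]
  simp only [negacyclic_apply]
  rw [Fin.sum_univ_eq_sum_range (fun l => Ent v a (i:ℕ) l * Ent v a (j:ℕ) l) v,
    Fin.sum_univ_eq_sum_range (fun l => Ent v b (i:ℕ) l * Ent v b (j:ℕ) l) v]
  by_cases hij : i = j
  · subst hij
    rw [diag_sum v a ha (i:ℕ) hi, diag_sum v b hb (i:ℕ) hi, if_pos rfl]
    push_cast
    ring
  · have hne : (i:ℕ) ≠ (j:ℕ) := fun h => hij (Fin.ext h)
    rw [pair1 v a b hng (i:ℕ) (j:ℕ) hi hj hne, if_neg hij, mul_zero]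

lemma M2 (v : ℕ) (a b : ℕ → ℤ)
    (ha : ∀ i, i < v → a i = 1 ∨ a i = -1) (hb : ∀ i, i < v → b i = 1 ∨ b i = -1)
    (hng : ∀ k, 0 < k → k < v → NAF v a k + NAF v b k = 0) :
    (negacyclic v a)ᵀ * negacyclic v a + (negacyclic v b)ᵀ * negacyclic v b =
      ((2 * v : ℕ) : ℤ) • (1 : Matrix (Fin v) (Fin v) ℤ) := by
  ext i j
  have hi := i.isLt
  have hj := j.isLt
  simp only [Matrix.add_apply, Matrix.mul_apply, Matrix.transpose_apply,
    Matrix.smul_apply, Matrix.one_apply, smul_eq_mul]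
  simp only [negacyclic_apply]
  rw [Fin.sum_univ_eq_sum_range (fun l => Ent v a l (i:ℕ) * Ent v a l (j:ℕ)) v,
    Fin.sum_univ_eq_sum_range (fun l => Ent v b l (i:ℕ) * Ent v b l (j:ℕ)) v]
  by_cases hij : i = j
  · subst hij
    rw [diag_sum' v a ha (i:ℕ) hi, diag_sum' v b hb (i:ℕ) hi, if_pos rfl]
    push_cast
    ring
  · have hne : (i:ℕ) ≠ (j:ℕ) := fun h => hij (Fin.ext h)
    rw [pair2 v a b hng (i:ℕ) (j:ℕ) hi hj hne, if_neg hij, mul_zero]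

lemma Mcomm (v : ℕ) (a b : ℕ → ℤ) :
    negacyclic v a * negacyclic v b = negacyclic v b * negacyclic v a := by
  have : Commute (negacyclic v a) (negacyclic v b) := by
    apply Commute.sum_left
    intro i _
    apply Commute.sum_right
    intro j _
    exact (((Commute.refl (negaShift v)).pow_pow i j).smul_left (a i)).smul_right (b j)
  exact this

lemma Skew1 (v : ℕ) (a : ℕ → ℤ)
    (hqs : ∀ k, 0 < k → k < v → a k = a (v - k)) (ha0 : a 0 = 1) :
    negacyclic v a + (negacyclic v a)ᵀ = (2 : ℤ) • (1 : Matrix (Fin v) (Fin v) ℤ) := by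
  ext i j
  have hi := i.isLt
  have hj := j.isLt
  simp only [Matrix.add_apply, Matrix.transpose_apply, Matrix.smul_apply,
    Matrix.one_apply, smul_eq_mul, negacyclic_apply]
  by_cases hij : i = j
  · subst hij
    rw [Ent, if_pos (le_refl _), Nat.sub_self, ha0, if_pos rfl]
    norm_num
  · have hne : (i:ℕ) ≠ (j:ℕ) := fun h => hij (Fin.ext h)
    rw [if_neg hij, mul_zero, Ent, Ent]
    rcases Nat.lt_or_ge (i:ℕ) (j:ℕ) with h | h
    · rw [if_pos (by omega), if_neg (by omega)]
      have := hqs ((j:ℕ) - (i:ℕ)) (by omega) (by omega)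
      have g : v + (i:ℕ) - (j:ℕ) = v - ((j:ℕ) - (i:ℕ)) := by omega
      rw [g, ← this]
      ring
    · rw [if_neg (by omega), if_pos (by omega)]
      have := hqs ((i:ℕ) - (j:ℕ)) (by omega) (by omega)
      have g : v + (j:ℕ) - (i:ℕ) = v - ((i:ℕ) - (j:ℕ)) := by omega
      rw [g, ← this]
      ring

lemma twoNBlock_diag (v : ℕ) (a b : ℕ → ℤ) (ha0 : a 0 = 1) (i : Fin v ⊕ Fin v) :
    twoNBlock v a b i i = 1 := by
  cases i with
  | inl i =>
    show negacyclic v a i i = 1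
    rw [negacyclic_apply, Ent, if_pos (le_refl _), Nat.sub_self, ha0]
  | inr i =>
    show (negacyclic v a)ᵀ i i = 1
    rw [Matrix.transpose_apply, negacyclic_apply, Ent, if_pos (le_refl _),
      Nat.sub_self, ha0]


/-- for a negaperiodic Golay pair `(a,b)` of length `v` with `a`
quasi-symmetric and `a_0 = 1`, the 2N-type matrix `H = [[A,B],[-Bᵀ,Aᵀ]]` is
skew-Hadamard, and replacing its diagonal entries by `0` gives a weighing matrix
`W(2v, 2v-1)`. -/
theorem quasi_symmetric_ngpair_gives_skew_hadamard_and_weighing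
    (v : ℕ) (hv : 0 < v) (a b : ℕ → ℤ)
    (ha : ∀ i, i < v → a i = 1 ∨ a i = -1)
    (hb : ∀ i, i < v → b i = 1 ∨ b i = -1)
    (hng : ∀ k, 0 < k → k < v → NAF v a k + NAF v b k = 0)
    (hqs : ∀ k, 0 < k → k < v → a k = a (v - k))
    (ha0 : a 0 = 1) :
    (∀ i j, twoNBlock v a b i j = 1 ∨ twoNBlock v a b i j = -1) ∧
    (twoNBlock v a b + (twoNBlock v a b).transpose =
      (2 : ℤ) • (1 : Matrix (Fin v ⊕ Fin v) (Fin v ⊕ Fin v) ℤ)) ∧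
    (twoNBlock v a b * (twoNBlock v a b).transpose =
      ((2 * v : ℕ) : ℤ) • (1 : Matrix (Fin v ⊕ Fin v) (Fin v ⊕ Fin v) ℤ)) ∧
    (∀ i j, zeroDiag (twoNBlock v a b) i j = 0 ∨ zeroDiag (twoNBlock v a b) i j = 1 ∨
      zeroDiag (twoNBlock v a b) i j = -1) ∧
    (zeroDiag (twoNBlock v a b) * (zeroDiag (twoNBlock v a b)).transpose =
      ((2 * v : ℕ) - 1 : ℤ) • (1 : Matrix (Fin v ⊕ Fin v) (Fin v ⊕ Fin v) ℤ)) := by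
  have hent : ∀ (c : ℕ → ℤ), (∀ i, i < v → c i = 1 ∨ c i = -1) →
      ∀ (i j : Fin v), negacyclic v c i j = 1 ∨ negacyclic v c i j = -1 := by
    intro c hc i j
    have hi := i.isLt
    have hj := j.isLt
    rw [negacyclic_apply, Ent]
    split_ifs with h
    · exact hc _ (by omega)
    · rcases hc (v + (j:ℕ) - (i:ℕ)) (by omega) with h1 | h1 <;> rw [h1]
      · right; norm_num
      · left; norm_num
  have part1 : ∀ i j, twoNBlock v a b i j = 1 ∨ twoNBlock v a b i j = -1 := by
    intro i j
    cases i with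
    | inl i =>
      cases j with
      | inl j => exact hent a ha i j
      | inr j => exact hent b hb i j
    | inr i =>
      cases j with
      | inl j =>
        have e : twoNBlock v a b (Sum.inr i) (Sum.inl j) = -(negacyclic v b j i) := rfl
        rw [e]
        rcases hent b hb j i with h | h <;> rw [h]
        · right; norm_num
        · left; norm_num
      | inr j =>
        show (negacyclic v a)ᵀ i j = 1 ∨ _
        rw [Matrix.transpose_apply]
        exact hent a ha j i
  have part2 : twoNBlock v a b + (twoNBlock v a b).transpose =
      (2 : ℤ) • (1 : Matrix (Fin v ⊕ Fin v) (Fin v ⊕ Fin v) ℤ) := by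
    rw [twoNBlock, Matrix.fromBlocks_transpose, Matrix.transpose_neg,
      Matrix.transpose_transpose, Matrix.transpose_transpose, Matrix.fromBlocks_add,
      ← Matrix.fromBlocks_one, Matrix.fromBlocks_smul]
    rw [Skew1 v a hqs ha0, add_neg_cancel, neg_add_cancel,
      add_comm ((negacyclic v a)ᵀ) (negacyclic v a), Skew1 v a hqs ha0, smul_zero]
  have part3 : twoNBlock v a b * (twoNBlock v a b).transpose =
      ((2 * v : ℕ) : ℤ) • (1 : Matrix (Fin v ⊕ Fin v) (Fin v ⊕ Fin v) ℤ) := by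
    have hTR : negacyclic v a * -(negacyclic v b) + negacyclic v b * negacyclic v a
        = 0 := by
      rw [Matrix.mul_neg, Mcomm v a b, neg_add_cancel]
    have hBL : -(negacyclic v b)ᵀ * (negacyclic v a)ᵀ +
        (negacyclic v a)ᵀ * (negacyclic v b)ᵀ = 0 := by
      rw [Matrix.neg_mul, ← Matrix.transpose_mul, ← Matrix.transpose_mul, Mcomm v a b,
        neg_add_cancel]
    have hBR : -(negacyclic v b)ᵀ * -(negacyclic v b) +
        (negacyclic v a)ᵀ * negacyclic v a =
        ((2 * v : ℕ) : ℤ) • (1 : Matrix (Fin v) (Fin v) ℤ) := by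
      rw [Matrix.neg_mul, Matrix.mul_neg, neg_neg, add_comm]
      exact M2 v a b ha hb hng
    rw [twoNBlock, Matrix.fromBlocks_transpose, Matrix.transpose_neg,
      Matrix.transpose_transpose, Matrix.transpose_transpose, Matrix.fromBlocks_multiply,
      M1 v a b ha hb hng, hTR, hBL, hBR, ← Matrix.fromBlocks_one, Matrix.fromBlocks_smul,
      smul_zero]
  have hzd : zeroDiag (twoNBlock v a b) = twoNBlock v a b - 1 := by
    ext i j
    simp only [zeroDiag, Matrix.of_apply, Matrix.sub_apply, Matrix.one_apply]
    by_cases h : i = j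
    · subst h
      rw [if_pos rfl, if_pos rfl, twoNBlock_diag v a b ha0]
      ring
    · rw [if_neg h, if_neg h]
      ring
  have part4 : ∀ i j, zeroDiag (twoNBlock v a b) i j = 0 ∨
      zeroDiag (twoNBlock v a b) i j = 1 ∨ zeroDiag (twoNBlock v a b) i j = -1 := by
    intro i j
    by_cases h : i = j
    · left
      simp [zeroDiag, h]
    · right
      have : zeroDiag (twoNBlock v a b) i j = twoNBlock v a b i j := by
        simp [zeroDiag, h]
      rw [this]
      exact part1 i j
  have part5 : zeroDiag (twoNBlock v a b) * (zeroDiag (twoNBlock v a b)).transpose =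
      ((2 * v : ℕ) - 1 : ℤ) • (1 : Matrix (Fin v ⊕ Fin v) (Fin v ⊕ Fin v) ℤ) := by
    rw [hzd, Matrix.transpose_sub, Matrix.transpose_one]
    have expand : (twoNBlock v a b - 1) * ((twoNBlock v a b).transpose - 1) =
        twoNBlock v a b * (twoNBlock v a b).transpose -
          (twoNBlock v a b + (twoNBlock v a b).transpose) + 1 := by
      noncomm_ring
    rw [expand, part3, part2, ← sub_smul,
      show ((2 * v : ℕ) - 1 : ℤ) = (((2 * v : ℕ) : ℤ) - 2) + 1 by ring,
      add_smul, one_smul]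
  exact ⟨part1, part2, part3, part4, part5⟩
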